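/- For a multiplicative n-Hom Lie superalgebra N, [QDer(N), QC(N)] ⊆ QC(N): if D is a homogeneous α^k-quasiderivation of degree ξ and E a homogeneous α^s-quasicentroid element of degree η, then the supercommutator [D,E] = DE − (−1)^{ξη}ED is an α^{k+s}-quasicentroid element of degree ξ+η. -/

import Mathlib

open scoped BigOperators

noncomputable section

variable {𝔽 : Type*} [Field 𝔽]
variable {N : Type*} [AddCommGroup N] [Module 𝔽 N]

/-- The sign `(-1)^g` for `g : ZMod 2`. -/
def sgn (𝔽 : Type*) [Field 𝔽] (g : ZMod 2) : 𝔽 := if g = 0 then 1 else -1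

/-- `|X_{i-1}|` : the sum of the degrees `d j` for `j < i`. -/
def psum {m : ℕ} (d : Fin m → ZMod 2) (i : Fin m) : ZMod 2 :=
  ∑ j ∈ Finset.univ.filter (fun j => j < i), d j

/-- `D` is homogeneous of degree `ξ` with respect to the `ℤ₂`-grading `gr`. -/
def Homog (gr : ZMod 2 → Submodule 𝔽 N) (ξ : ZMod 2) (D : N →ₗ[𝔽] N) : Prop :=
  ∀ g : ZMod 2, ∀ x ∈ gr g, D x ∈ gr (g + ξ)

/-- `(N, br, α)` is a multiplicative `n`-Hom Lie superalgebra, where `n = m + 1`: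
`N = N₀ ⊕ N₁` is `ℤ₂`-graded, the `n`-multilinear bracket `br` is even (adds degrees),
super skew-symmetric in adjacent arguments, `α` is even, multiplicative, and the super
Hom-Jacobi identity holds. -/
structure IsMNHLS {m : ℕ} (gr : ZMod 2 → Submodule 𝔽 N)
    (br : MultilinearMap 𝔽 (fun _ : Fin (m + 1) => N) N) (α : N →ₗ[𝔽] N) : Prop where
  internal : DirectSum.IsInternal gr
  alpha_even : ∀ g : ZMod 2, ∀ x ∈ gr g, α x ∈ gr g
  br_deg : ∀ (d : Fin (m + 1) → ZMod 2) (x : Fin (m + 1) → N),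
      (∀ i, x i ∈ gr (d i)) → br x ∈ gr (∑ i, d i)
  skew : ∀ (d : Fin (m + 1) → ZMod 2) (x : Fin (m + 1) → N),
      (∀ i, x i ∈ gr (d i)) → ∀ i j : Fin (m + 1), (i : ℕ) + 1 = (j : ℕ) →
      br x = -sgn 𝔽 (d i * d j) • br (x ∘ Equiv.swap i j)
  alpha_br : ∀ x : Fin (m + 1) → N, α (br x) = br fun i => α (x i)
  jacobi : ∀ (dx : Fin m → ZMod 2) (x : Fin m → N)
      (dy : Fin (m + 1) → ZMod 2) (y : Fin (m + 1) → N),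
      (∀ i, x i ∈ gr (dx i)) → (∀ i, y i ∈ gr (dy i)) →
      br (Fin.snoc (fun i => α (x i)) (br y)) =
        ∑ i : Fin (m + 1), sgn 𝔽 ((∑ j, dx j) * psum dy i) •
          br (Function.update (fun j => α (y j)) i (br (Fin.snoc x (y i))))

/-- `D` is a homogeneous `α^k`-derivation of degree `ξ`. -/
def IsDer {m : ℕ} (gr : ZMod 2 → Submodule 𝔽 N)
    (br : MultilinearMap 𝔽 (fun _ : Fin (m + 1) => N) N) (α : N →ₗ[𝔽] N)
    (k : ℕ) (ξ : ZMod 2) (D : N →ₗ[𝔽] N) : Prop :=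
  Homog gr ξ D ∧ D ∘ₗ α = α ∘ₗ D ∧
    ∀ (d : Fin (m + 1) → ZMod 2) (x : Fin (m + 1) → N), (∀ i, x i ∈ gr (d i)) →
      D (br x) = ∑ i : Fin (m + 1), sgn 𝔽 (ξ * psum d i) •
        br (Function.update (fun j => (α ^ k) (x j)) i (D (x i)))

/-- `D` is a homogeneous `α^k`-quasiderivation of degree `ξ` with associated map `D'`. -/
def IsQDerWith {m : ℕ} (gr : ZMod 2 → Submodule 𝔽 N)
    (br : MultilinearMap 𝔽 (fun _ : Fin (m + 1) => N) N) (α : N →ₗ[𝔽] N)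
    (k : ℕ) (ξ : ZMod 2) (D D' : N →ₗ[𝔽] N) : Prop :=
  Homog gr ξ D ∧ D ∘ₗ α = α ∘ₗ D ∧ Homog gr ξ D' ∧ D' ∘ₗ α = α ∘ₗ D' ∧
    ∀ (d : Fin (m + 1) → ZMod 2) (x : Fin (m + 1) → N), (∀ i, x i ∈ gr (d i)) →
      (∑ i : Fin (m + 1), sgn 𝔽 (ξ * psum d i) •
        br (Function.update (fun j => (α ^ k) (x j)) i (D (x i)))) = D' (br x)

/-- `D` is a homogeneous `α^k`-quasiderivation of degree `ξ`. -/
def IsQDer {m : ℕ} (gr : ZMod 2 → Submodule 𝔽 N)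
    (br : MultilinearMap 𝔽 (fun _ : Fin (m + 1) => N) N) (α : N →ₗ[𝔽] N)
    (k : ℕ) (ξ : ZMod 2) (D : N →ₗ[𝔽] N) : Prop :=
  ∃ D' : N →ₗ[𝔽] N, IsQDerWith gr br α k ξ D D'

/-- `D` is a homogeneous generalized `α^k`-derivation of degree `ξ`:
there are `D⁽¹⁾, …, D⁽ⁿ⁾` (here `DD i` for positions `i = 1, …, n-1`, with `DD 0 = D`,
and `Dn = D⁽ⁿ⁾`) all homogeneous of degree `ξ` and commuting with `α`, satisfying the
defining identity. -/
def IsGDer {m : ℕ} (gr : ZMod 2 → Submodule 𝔽 N)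
    (br : MultilinearMap 𝔽 (fun _ : Fin (m + 1) => N) N) (α : N →ₗ[𝔽] N)
    (k : ℕ) (ξ : ZMod 2) (D : N →ₗ[𝔽] N) : Prop :=
  Homog gr ξ D ∧ D ∘ₗ α = α ∘ₗ D ∧
    ∃ (DD : Fin (m + 1) → (N →ₗ[𝔽] N)) (Dn : N →ₗ[𝔽] N),
      DD 0 = D ∧ (∀ i, Homog gr ξ (DD i)) ∧ (∀ i, DD i ∘ₗ α = α ∘ₗ DD i) ∧
      Homog gr ξ Dn ∧ Dn ∘ₗ α = α ∘ₗ Dn ∧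
      ∀ (d : Fin (m + 1) → ZMod 2) (x : Fin (m + 1) → N), (∀ i, x i ∈ gr (d i)) →
        (∑ i : Fin (m + 1), sgn 𝔽 (ξ * psum d i) •
          br (Function.update (fun j => (α ^ k) (x j)) i (DD i (x i)))) = Dn (br x)

/-- `D` is a homogeneous `α^k`-centroid element of degree `ξ`. -/
def IsCent {m : ℕ} (gr : ZMod 2 → Submodule 𝔽 N)
    (br : MultilinearMap 𝔽 (fun _ : Fin (m + 1) => N) N) (α : N →ₗ[𝔽] N)
    (k : ℕ) (ξ : ZMod 2) (D : N →ₗ[𝔽] N) : Prop :=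
  Homog gr ξ D ∧ D ∘ₗ α = α ∘ₗ D ∧
    ∀ (d : Fin (m + 1) → ZMod 2) (x : Fin (m + 1) → N), (∀ i, x i ∈ gr (d i)) →
      (∀ i : Fin (m + 1),
        br (Function.update (fun j => (α ^ k) (x j)) 0 (D (x 0))) =
          sgn 𝔽 (ξ * psum d i) •
            br (Function.update (fun j => (α ^ k) (x j)) i (D (x i)))) ∧
      br (Function.update (fun j => (α ^ k) (x j)) 0 (D (x 0))) = D (br x)

/-- `D` is a homogeneous `α^k`-quasicentroid element of degree `ξ`. -/
def IsQCent {m : ℕ} (gr : ZMod 2 → Submodule 𝔽 N)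
    (br : MultilinearMap 𝔽 (fun _ : Fin (m + 1) => N) N) (α : N →ₗ[𝔽] N)
    (k : ℕ) (ξ : ZMod 2) (D : N →ₗ[𝔽] N) : Prop :=
  Homog gr ξ D ∧ D ∘ₗ α = α ∘ₗ D ∧
    ∀ (d : Fin (m + 1) → ZMod 2) (x : Fin (m + 1) → N), (∀ i, x i ∈ gr (d i)) →
      ∀ i : Fin (m + 1),
        br (Function.update (fun j => (α ^ k) (x j)) 0 (D (x 0))) =
          sgn 𝔽 (ξ * psum d i) •
            br (Function.update (fun j => (α ^ k) (x j)) i (D (x i)))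

/-- `D` is a homogeneous `α^k`-center derivation of degree `ξ`. -/
def IsZDer {m : ℕ} (gr : ZMod 2 → Submodule 𝔽 N)
    (br : MultilinearMap 𝔽 (fun _ : Fin (m + 1) => N) N) (α : N →ₗ[𝔽] N)
    (k : ℕ) (ξ : ZMod 2) (D : N →ₗ[𝔽] N) : Prop :=
  Homog gr ξ D ∧ D ∘ₗ α = α ∘ₗ D ∧
    ∀ (d : Fin (m + 1) → ZMod 2) (x : Fin (m + 1) → N), (∀ i, x i ∈ gr (d i)) →
      br (Function.update (fun j => (α ^ k) (x j)) 0 (D (x 0))) = 0 ∧ D (br x) = 0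

/-- The center `Z(N) = {x : [x, y₂, …, yₙ] = 0}`. -/
def center {m : ℕ} (br : MultilinearMap 𝔽 (fun _ : Fin (m + 1) => N) N) :
    Submodule 𝔽 N where
  carrier := {x | ∀ y : Fin (m + 1) → N, br (Function.update y 0 x) = 0}
  add_mem' := by
    intro a b ha hb y
    rw [MultilinearMap.map_update_add, ha y, hb y, add_zero]
  zero_mem' := by
    intro y
    exact br.map_update_zero y 0
  smul_mem' := by
    intro c a ha y
    rw [MultilinearMap.map_update_smul, ha y, smul_zero]

/-- The Jordan product `D • E = ½(DE + (-1)^{|D||E|} ED)` of operators of degrees `ξ, η`. -/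
def jprod (𝔽 : Type*) [Field 𝔽] {N : Type*} [AddCommGroup N] [Module 𝔽 N]
    (ξ η : ZMod 2) (D E : N →ₗ[𝔽] N) : N →ₗ[𝔽] N :=
  (2 : 𝔽)⁻¹ • (D ∘ₗ E + sgn 𝔽 (ξ * η) • (E ∘ₗ D))

/-- The Hom-associator of the Jordan product with respect to `α̃(u) = α ∘ u`, where
`x, y, z` have degrees `a, b, c`. -/
def jassoc (𝔽 : Type*) [Field 𝔽] {N : Type*} [AddCommGroup N] [Module 𝔽 N]
    (α : N →ₗ[𝔽] N) (a b c : ZMod 2) (x y z : N →ₗ[𝔽] N) : N →ₗ[𝔽] N :=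
  jprod 𝔽 (a + b) c (jprod 𝔽 a b x y) (α ∘ₗ z) -
    jprod 𝔽 a (b + c) (α ∘ₗ x) (jprod 𝔽 b c y z)

/-- The bracket subalgebra `[N, …, N]`, the span of all brackets. -/
def brSub {m : ℕ} (br : MultilinearMap 𝔽 (fun _ : Fin (m + 1) => N) N) :
    Submodule 𝔽 N :=
  Submodule.span 𝔽 (Set.range fun x : Fin (m + 1) → N => br x)

/-- The bracket of `Ň = Nt + Ntⁿ` (modelled as `N × N`, first coordinate the coefficient
of `t`, second the coefficient of `tⁿ`): `[x₁t, …, xₙt] = [x₁, …, xₙ]tⁿ` and every bracket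
involving a `tⁿ`-term vanishes. -/
def checkBr {m : ℕ} (br : MultilinearMap 𝔽 (fun _ : Fin (m + 1) => N) N) :
    MultilinearMap 𝔽 (fun _ : Fin (m + 1) => N × N) (N × N) :=
  (LinearMap.inr 𝔽 N N).compMultilinearMap
    (br.compLinearMap fun _ => LinearMap.fst 𝔽 N N)

/-- The grading of `Ň = Nt + Ntⁿ`. -/
def checkGr (gr : ZMod 2 → Submodule 𝔽 N) (g : ZMod 2) : Submodule 𝔽 (N × N) :=
  (gr g).prod (gr g)

/-- The map `φ(D) : Ň → Ň`, `φ(D)(at + utⁿ + btⁿ) = D(a)t + D'(b)tⁿ`, where `π` is the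
projection of `N` onto `[N, …, N]` along `U`. -/
def phiMap (D D' π : N →ₗ[𝔽] N) : N × N →ₗ[𝔽] N × N :=
  LinearMap.prodMap D (D' ∘ₗ π)

/-!
Expand `D` (quasiderivation identity) on the two tuples obtained from `x` by applying `E` in
slot `0`, resp. in slot `i`, and `α^s` elsewhere. Since `E` is a quasicentroid element the
brackets of these tuples differ by the sign `(-1)^{η|X_{i-1}|}`, hence so do the two
expansions. A term in which `D` and `E` act on different arguments is a bracket of a tuple
with `D` in some slot `j` and `E` in slot `0` (resp. `i`), so by the quasicentroid property
applied to that tuple such terms cancel in pairs. What survives are the terms with `DE` and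
`ED` in slots `0` and `i`, and that is the quasicentroid identity for `DE - (-1)^{ξη} ED`.
-/

theorem sgn_zero : sgn 𝔽 0 = 1 := if_pos rfl

theorem sgn_add (a b : ZMod 2) : sgn 𝔽 (a + b) = sgn 𝔽 a * sgn 𝔽 b := by
  have h11 : (1 + 1 : ZMod 2) = 0 := rfl
  have h01 : ∀ c : ZMod 2, c = 0 ∨ c = 1 := by decide
  rcases h01 a with rfl | rfl <;> rcases h01 b with rfl | rfl <;> simp [sgn, h11]

theorem sgn_smul_sgn_smul (a b : ZMod 2) (v : N) :
    sgn 𝔽 a • sgn 𝔽 b • v = sgn 𝔽 (a + b) • v := by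
  rw [smul_smul, sgn_add]

theorem sgn_smul_eq_iff_eq_sgn_smul {a : ZMod 2} {v w : N} :
    sgn 𝔽 a • v = w ↔ v = sgn 𝔽 a • w := by
  constructor <;> rintro rfl <;> rw [sgn_smul_sgn_smul, CharTwo.add_self_eq_zero, sgn_zero,
    one_smul]

theorem psum_zero {m : ℕ} (d : Fin (m + 1) → ZMod 2) : psum d 0 = 0 :=
  Finset.sum_eq_zero fun j hj => absurd (Finset.mem_filter.mp hj).2 (Fin.not_lt_zero j)

theorem psum_update_add {m : ℕ} (d : Fin m → ZMod 2) (j i : Fin m) (c : ZMod 2) :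
    psum (Function.update d j (d j + c)) i = psum d i + if j < i then c else 0 := by
  unfold psum
  split_ifs with hj
  · have hmem : j ∈ Finset.univ.filter (· < i) := by simp [hj]
    rw [Finset.sum_update_of_mem hmem, Finset.sdiff_singleton_eq_erase,
      ← Finset.add_sum_erase _ _ hmem]
    ring
  · rw [Finset.sum_update_of_notMem (by simp [hj]), add_zero]

section Grading

variable {gr : ZMod 2 → Submodule 𝔽 N}

theorem Homog.comp {ξ η : ZMod 2} {D E : N →ₗ[𝔽] N} (hD : Homog gr ξ D) (hE : Homog gr η E) :
    Homog gr (ξ + η) (D ∘ₗ E) := fun g x hx => by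
  simpa only [LinearMap.comp_apply, add_assoc, add_comm η] using hD _ _ (hE g x hx)

theorem Homog.sub {ξ : ZMod 2} {D E : N →ₗ[𝔽] N} (hD : Homog gr ξ D) (hE : Homog gr ξ E) :
    Homog gr ξ (D - E) := fun g x hx => sub_mem (hD g x hx) (hE g x hx)

theorem Homog.smul {ξ : ZMod 2} {D : N →ₗ[𝔽] N} (hD : Homog gr ξ D) (c : 𝔽) :
    Homog gr ξ (c • D) := fun g x hx => Submodule.smul_mem _ c (hD g x hx)

theorem pow_apply_mem {α : N →ₗ[𝔽] N} (hα : ∀ g, ∀ x ∈ gr g, α x ∈ gr g) (t : ℕ) :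
    ∀ g, ∀ x ∈ gr g, (α ^ t) x ∈ gr g := by
  induction t with
  | zero => exact fun g x hx => hx
  | succ t ih => exact fun g x hx => by rw [pow_succ]; exact ih g _ (hα g x hx)

end Grading

def placeAt {n : ℕ} (f T : N →ₗ[𝔽] N) (x : Fin n → N) (j : Fin n) : Fin n → N :=
  Function.update (fun l => f (x l)) j (T (x j))

section PlaceAt

variable {n : ℕ} {f g T S : N →ₗ[𝔽] N} (x : Fin n → N)

theorem placeAt_placeAt_self (j : Fin n) :
    placeAt f T (placeAt g S x j) j = placeAt (f * g) (T * S) x j := by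
  funext l
  rcases eq_or_ne l j with rfl | hl
  · simp [placeAt]
  · simp [placeAt, Function.update_of_ne hl]

theorem placeAt_placeAt_of_ne (hTg : Commute T g) (hSf : Commute S f) (hfg : Commute f g)
    {j l : Fin n} (hjl : j ≠ l) :
    placeAt f T (placeAt g S x l) j = placeAt g S (placeAt f T x j) l := by
  funext i
  rcases eq_or_ne i j with rfl | hij
  · simp [placeAt, Function.update_of_ne hjl, ← Module.End.mul_apply, hTg.eq]
  rcases eq_or_ne i l with rfl | hil
  · simp [placeAt, Function.update_of_ne hjl.symm, ← Module.End.mul_apply, hSf.eq]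
  · simp [placeAt, Function.update_of_ne hij, Function.update_of_ne hil,
      ← Module.End.mul_apply, hfg.eq]

theorem placeAt_mem {gr : ZMod 2 → Submodule 𝔽 N} {ξ : ZMod 2} {d : Fin n → ZMod 2}
    (hf : ∀ g, ∀ y ∈ gr g, f y ∈ gr g) (hT : Homog gr ξ T) {x : Fin n → N}
    (hx : ∀ i, x i ∈ gr (d i)) (j l : Fin n) :
    placeAt f T x j l ∈ gr (Function.update d j (d j + ξ) l) := by
  rcases eq_or_ne l j with rfl | hl
  · simpa [placeAt] using hT _ _ (hx l)
  · simpa [placeAt, Function.update_of_ne hl] using hf _ _ (hx l)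

theorem map_placeAt_sub_smul (br : MultilinearMap 𝔽 (fun _ : Fin n => N) N) (c : 𝔽)
    (j : Fin n) :
    br (placeAt f (T - c • S) x j) = br (placeAt f T x j) - c • br (placeAt f S x j) := by
  simp only [placeAt, LinearMap.sub_apply, LinearMap.smul_apply,
    MultilinearMap.map_update_sub, MultilinearMap.map_update_smul]

end PlaceAt

section Supercommutator

variable {m : ℕ} {gr : ZMod 2 → Submodule 𝔽 N}
  {br : MultilinearMap 𝔽 (fun _ : Fin (m + 1) => N) N} {α : N →ₗ[𝔽] N} {k s : ℕ}
  {ξ η : ZMod 2} {D D' E : N →ₗ[𝔽] N}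

theorem IsQDerWith.sum_sgn_smul_map_placeAt (hD : IsQDerWith gr br α k ξ D D')
    {d : Fin (m + 1) → ZMod 2} {x : Fin (m + 1) → N} (hx : ∀ i, x i ∈ gr (d i)) :
    ∑ j, sgn 𝔽 (ξ * psum d j) • br (placeAt (α ^ k) D x j) = D' (br x) :=
  hD.2.2.2.2 d x hx

theorem IsQCent.map_placeAt_zero (hE : IsQCent gr br α s η E)
    {d : Fin (m + 1) → ZMod 2} {x : Fin (m + 1) → N} (hx : ∀ i, x i ∈ gr (d i))
    (i : Fin (m + 1)) :
    br (placeAt (α ^ s) E x 0) = sgn 𝔽 (η * psum d i) • br (placeAt (α ^ s) E x i) :=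
  hE.2.2 d x hx i

theorem IsQDerWith.sum_sgn_smul_map_placeAt_placeAt_zero (hα : ∀ g, ∀ y ∈ gr g, α y ∈ gr g)
    (hD : IsQDerWith gr br α k ξ D D') (hE : IsQCent gr br α s η E)
    {d : Fin (m + 1) → ZMod 2} {x : Fin (m + 1) → N} (hx : ∀ i, x i ∈ gr (d i))
    (i : Fin (m + 1)) :
    ∑ j, sgn 𝔽 (ξ * psum (Function.update d 0 (d 0 + η)) j) •
        br (placeAt (α ^ k) D (placeAt (α ^ s) E x 0) j) =
      sgn 𝔽 (η * psum d i) • ∑ j, sgn 𝔽 (ξ * psum (Function.update d i (d i + η)) j) •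
        br (placeAt (α ^ k) D (placeAt (α ^ s) E x i) j) := by
  have hy := placeAt_mem (pow_apply_mem hα s) hE.1 hx
  rw [hD.sum_sgn_smul_map_placeAt (hy 0), hD.sum_sgn_smul_map_placeAt (hy i),
    hE.map_placeAt_zero hx i, map_smul]

theorem IsQDerWith.map_placeAt_supercomm_zero (hα : ∀ g, ∀ y ∈ gr g, α y ∈ gr g)
    (hD : IsQDerWith gr br α k ξ D D') (hE : IsQCent gr br α s η E)
    {d : Fin (m + 1) → ZMod 2} {x : Fin (m + 1) → N} (hx : ∀ i, x i ∈ gr (d i))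
    (i : Fin (m + 1)) :
    br (placeAt (α ^ (k + s)) (D * E - sgn 𝔽 (ξ * η) • (E * D)) x 0) =
      sgn 𝔽 ((ξ + η) * psum d i) •
        br (placeAt (α ^ (k + s)) (D * E - sgn 𝔽 (ξ * η) • (E * D)) x i) := by
  rcases eq_or_ne i 0 with rfl | hi
  · rw [psum_zero, mul_zero, sgn_zero, one_smul]
  set y := placeAt (α ^ s) E x
  set z := placeAt (α ^ k) D x
  have hDE : ∀ j, placeAt (α ^ k) D (y j) j = placeAt (α ^ (k + s)) (D * E) x j := fun j => by
    rw [placeAt_placeAt_self, pow_add]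
  have hED : ∀ j, placeAt (α ^ s) E (z j) j = placeAt (α ^ (k + s)) (E * D) x j := fun j => by
    rw [placeAt_placeAt_self, ← pow_add, add_comm s k]
  have hswap : ∀ {l j}, j ≠ l → placeAt (α ^ k) D (y l) j = placeAt (α ^ s) E (z j) l :=
    placeAt_placeAt_of_ne x (Commute.pow_right hD.2.1 s) (Commute.pow_right hE.2.1 k)
      (Commute.pow_pow_self α k s)
  have hEz : ∀ j, br (placeAt (α ^ s) E (z j) 0) =
      sgn 𝔽 (η * (psum d i + if j < i then ξ else 0)) • br (placeAt (α ^ s) E (z j) i) :=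
    fun j => by
      rw [← psum_update_add]
      exact hE.map_placeAt_zero (placeAt_mem (pow_apply_mem hα k) hD.1 hx j) i
  have hsum := hD.sum_sgn_smul_map_placeAt_placeAt_zero hα hE hx i
  -- For `j ∉ {0, i}` the `j`-th terms of the two expansions agree by `hEz j`.
  rw [← sub_eq_zero, Finset.smul_sum, ← Finset.sum_sub_distrib,
    Fintype.sum_eq_add 0 i hi.symm] at hsum
  · rw [hDE, hDE, hswap hi.symm, hswap hi, hEz, hED,
      sgn_smul_eq_iff_eq_sgn_smul.1 (hEz 0).symm, hED] at hsum
    simp only [psum_update_add, psum_zero, lt_self_iff_false, if_false,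
      if_pos (Fin.pos_of_ne_zero hi), mul_zero, add_zero, sgn_zero, one_mul, one_smul,
      smul_smul] at hsum
    have s1 : sgn 𝔽 (η * psum d i) * sgn 𝔽 (η * (psum d i + ξ)) = sgn 𝔽 (ξ * η) := by
      rw [← sgn_add]; congr 1; grind
    have s2 : sgn 𝔽 (ξ * (psum d i + η)) * sgn 𝔽 (η * psum d i) =
        sgn 𝔽 ((ξ + η) * psum d i) * sgn 𝔽 (ξ * η) := by
      rw [← sgn_add, ← sgn_add]; congr 1; grind
    have s3 : sgn 𝔽 (η * psum d i) * sgn 𝔽 (ξ * psum d i) = sgn 𝔽 ((ξ + η) * psum d i) := by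
      rw [← sgn_add]; congr 1; grind
    rw [s1, s2, s3] at hsum
    rw [map_placeAt_sub_smul, map_placeAt_sub_smul]
    linear_combination (norm := module) hsum
  · rintro j ⟨hj0, hji⟩
    rw [hswap hj0, hswap hji, hEz, psum_update_add, psum_update_add, sgn_smul_sgn_smul,
      sgn_smul_sgn_smul, sub_eq_zero]
    congr 2
    grind

end Supercommutator

theorem qder_bracket_qcent_general {𝔽 : Type*} [Field 𝔽]
    {N : Type*} [AddCommGroup N] [Module 𝔽 N] {m : ℕ}
    (gr : ZMod 2 → Submodule 𝔽 N) (br : MultilinearMap 𝔽 (fun _ : Fin (m + 1) => N) N)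
    (α : N →ₗ[𝔽] N) (H : IsMNHLS gr br α)
    (k s : ℕ) (ξ η : ZMod 2) (D E : N →ₗ[𝔽] N)
    (hD : IsQDer gr br α k ξ D) (hE : IsQCent gr br α s η E) :
    IsQCent gr br α (k + s) (ξ + η) (D ∘ₗ E - sgn 𝔽 (ξ * η) • (E ∘ₗ D)) := by
  obtain ⟨D', hD⟩ := hD
  have hDα : Commute D α := hD.2.1
  have hEα : Commute E α := hE.2.1
  refine ⟨?_, ?_, fun d x hx i => hD.map_placeAt_supercomm_zero H.alpha_even hE hx i⟩
  · exact (hD.1.comp hE.1).sub (add_comm η ξ ▸ (hE.1.comp hD.1).smul _)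
  · exact ((hDα.mul_left hEα).sub_left ((hEα.mul_left hDα).smul_left _)).eq

/-- Proposition 3.2(2): `[QDer(N), QC(N)] ⊆ QC(N)`. -/
theorem qder_bracket_qcent {𝔽 : Type*} [Field 𝔽] [CharZero 𝔽]
    {N : Type*} [AddCommGroup N] [Module 𝔽 N] {m : ℕ} (hm : 1 ≤ m)
    (gr : ZMod 2 → Submodule 𝔽 N) (br : MultilinearMap 𝔽 (fun _ : Fin (m + 1) => N) N)
    (α : N →ₗ[𝔽] N) (H : IsMNHLS gr br α)
    (k s : ℕ) (ξ η : ZMod 2) (D E : N →ₗ[𝔽] N)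
    (hD : IsQDer gr br α k ξ D) (hE : IsQCent gr br α s η E) :
    IsQCent gr br α (k + s) (ξ + η) (D ∘ₗ E - sgn 𝔽 (ξ * η) • (E ∘ₗ D)) :=
  qder_bracket_qcent_general gr br α H k s ξ η D E hD hE
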